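/- Let E be a symplectic vector space of dimension 4 over an arbitrary field, with symplectic basis e_1, e_2, e_3, e_4 satisfying ⟨e_i, e_j⟩ = 1 if j = 5−i (i < j) and 0 otherwise. If a linear functional h on Λ²E vanishes on all decomposable tensors v∧w with ⟨v,w⟩ = 0 (i.e., on the cone over the Lagrangian Grassmannian L(2,E)), then h = A·(X_{14} + X_{23}) for some scalar A, where X_{ij} denotes the dual basis vector of e_i∧e_j. -/

import Mathlib

open Finset

/-- The 0-indexed partner of `i : Fin (2n)` is `2n-1-i`; in the paper's 1-indexed
notation this is the pairing `i ↦ 2n-i+1`. -/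
def partner (n : ℕ) (i : Fin (2 * n)) : Fin (2 * n) :=
  ⟨2 * n - 1 - i.1, by have := i.2; omega⟩

/-- The standard symplectic form on `E = 𝔽^{2n}`:
`⟨e_i, e_j⟩ = 1` iff `j = partner i` and `i < j`, `-1` iff `i = partner j` and `j < i`,
and `0` otherwise. -/
def symForm (𝔽 : Type*) [Field 𝔽] (n : ℕ) (x y : Fin (2 * n) → 𝔽) : 𝔽 :=
  ∑ i : Fin n,
    (x ⟨i.1, by have := i.2; omega⟩ * y ⟨2 * n - 1 - i.1, by have := i.2; omega⟩ -
      x ⟨2 * n - 1 - i.1, by have := i.2; omega⟩ * y ⟨i.1, by have := i.2; omega⟩)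

/-- The Plücker coordinates of the decomposable tensor `w_1 ∧ ⋯ ∧ w_m ∈ Λ^m E`,
`E = 𝔽^{2n}`: the coordinate attached to an `m`-subset `S` of indices (an element of
`I(m, 2n)`) is the corresponding `m × m` minor. This identifies `Λ^m E` with the space of
functions `{S : Finset (Fin (2n)) // S.card = m} → 𝔽`. -/
def plucker (𝔽 : Type*) [Field 𝔽] (n m : ℕ) (w : Fin m → Fin (2 * n) → 𝔽)
    (S : {S : Finset (Fin (2 * n)) // S.card = m}) : 𝔽 :=
  Matrix.det (Matrix.of fun i j : Fin m => w i ((S.1.orderIsoOfFin S.2 j : Fin (2 * n))))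

/-- The affine cone over the Lagrangian Grassmannian `L(n, E)` in Plücker coordinates:
all tensors `w_1 ∧ ⋯ ∧ w_n` with `⟨w_i, w_j⟩ = 0` for all `i, j`. -/
def LagCone (𝔽 : Type*) [Field 𝔽] (n : ℕ) :
    Set ({S : Finset (Fin (2 * n)) // S.card = n} → 𝔽) :=
  {p | ∃ w : Fin n → Fin (2 * n) → 𝔽,
    (∀ i j, symForm 𝔽 n (w i) (w j) = 0) ∧ p = plucker 𝔽 n n w}

/-- Extend a coordinate vector indexed by `k`-subsets to all finsets, by `0`;
this encodes the convention that Plücker coordinates with repeated indices vanish. -/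
def coordExt (𝔽 : Type*) [Field 𝔽] (n k : ℕ)
    (p : {S : Finset (Fin (2 * n)) // S.card = k} → 𝔽) (S : Finset (Fin (2 * n))) : 𝔽 :=
  if h : S.card = k then p ⟨S, h⟩ else 0

/-- Removal of the `r`-th and `s`-th vectors (`r < s`) from an `n`-tuple:
`w_1, …, ŵ_r, …, ŵ_s, …, w_n`. -/
def removeTwo {𝔽 : Type*} [Field 𝔽] (n : ℕ) (w : Fin n → Fin (2 * n) → 𝔽) (r s : Fin n) :
    Fin (n - 2) → Fin (2 * n) → 𝔽 :=
  fun k => w (if k.1 < r.1 then ⟨k.1, by have := k.2; omega⟩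
    else if k.1 + 1 < s.1 then ⟨k.1 + 1, by have := k.2; omega⟩
    else ⟨k.1 + 2, by have := k.2; omega⟩)

/-- The value of the contraction map on the decomposable tensor `w_1 ∧ ⋯ ∧ w_n`:
`f(w_1∧⋯∧w_n) = Σ_{r<s} ⟨w_r, w_s⟩ (−1)^{r+s−1} w_1∧⋯∧ŵ_r∧⋯∧ŵ_s∧⋯∧w_n`,
written in Plücker coordinates of `Λ^{n-2} E`. (Indices here are 0-based, so the 1-based
sign `(−1)^{r+s−1}` becomes `(−1)^{r+s+1}`.) -/
def contractionDecomp (𝔽 : Type*) [Field 𝔽] (n : ℕ) (w : Fin n → Fin (2 * n) → 𝔽) :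
    {S : Finset (Fin (2 * n)) // S.card = n - 2} → 𝔽 :=
  fun t => ∑ r : Fin n, ∑ s : Fin n,
    if r < s then
      symForm 𝔽 n (w r) (w s) * (-1 : 𝔽) ^ (r.1 + s.1 + 1) *
        plucker 𝔽 n (n - 2) (removeTwo n w r s) t
    else 0

/-- The contraction functional `Π_{α_{rs}}` attached to a finset `t` (of cardinality `n-2`):
`Π_t (p) = Σ_{i=1}^n p_{i, t, 2n-i+1}`, where coordinates with repeated indices are `0`. -/
def PiVal (𝔽 : Type*) [Field 𝔽] (n : ℕ) (t : Finset (Fin (2 * n)))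
    (p : {S : Finset (Fin (2 * n)) // S.card = n} → 𝔽) : 𝔽 :=
  ∑ i : Fin n,
    coordExt 𝔽 n n p
      (insert ⟨i.1, by have := i.2; omega⟩
        (insert (partner n ⟨i.1, by have := i.2; omega⟩) t))

/-!
A functional `h` on `Λ²E` is determined by its six values `c_S = h(e_S)` on the coordinate
basis, and `h (v ∧ w) = Σ_{a<b} (v_a w_b - v_b w_a) c_{ab}`. The four isotropic pairs
`e_a ∧ e_b` with `{a, b} ≠ {0, 3}, {1, 2}` give `c_01 = c_02 = c_13 = c_23 = 0`, and the
isotropic pair `(e_0 + e_2) ∧ (e_1 + e_3)` then gives `c_03 = c_12`.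
-/

theorem Finset.orderEmbOfFin_pair {α : Type*} [LinearOrder α] {a b : α} (hab : a < b)
    (h : ({a, b} : Finset α).card = 2) : ({a, b} : Finset α).orderEmbOfFin h = ![a, b] := by
  refine (orderEmbOfFin_unique h (fun i => ?_) ?_).symm
  · fin_cases i <;> simp
  · simpa [Fin.strictMono_iff_lt_succ] using hab

theorem plucker_two_apply (𝔽 : Type*) [Field 𝔽] (n : ℕ) (v w : Fin (2 * n) → 𝔽)
    {a b : Fin (2 * n)} (hab : a < b) (h : ({a, b} : Finset (Fin (2 * n))).card = 2) :
    plucker 𝔽 n 2 ![v, w] ⟨{a, b}, h⟩ = v a * w b - v b * w a := by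
  simp [plucker, Matrix.det_fin_two, Finset.coe_orderIsoOfFin_apply,
    Finset.orderEmbOfFin_pair hab]

theorem symForm_two (𝔽 : Type*) [Field 𝔽] (x y : Fin (2 * 2) → 𝔽) :
    symForm 𝔽 2 x y = x 0 * y 3 - x 3 * y 0 + (x 1 * y 2 - x 2 * y 1) := by
  simp only [symForm, Fin.sum_univ_two]
  rfl

theorem sum_univ_pairs_fin_four {M : Type*} [AddCommMonoid M]
    (f : {S : Finset (Fin (2 * 2)) // S.card = 2} → M) :
    ∑ S, f S = f ⟨{0, 1}, by decide⟩ + f ⟨{0, 2}, by decide⟩ + f ⟨{0, 3}, by decide⟩ +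
      f ⟨{1, 2}, by decide⟩ + f ⟨{1, 3}, by decide⟩ + f ⟨{2, 3}, by decide⟩ := by
  rw [show (univ : Finset {S : Finset (Fin (2 * 2)) // S.card = 2}) =
      {⟨{0, 1}, by decide⟩, ⟨{0, 2}, by decide⟩, ⟨{0, 3}, by decide⟩, ⟨{1, 2}, by decide⟩,
        ⟨{1, 3}, by decide⟩, ⟨{2, 3}, by decide⟩} by decide]
  repeat rw [sum_insert (by decide)]
  rw [sum_singleton]
  abel

theorem LinearMap.apply_eq_sum_pairs_fin_four (𝔽 : Type*) [Field 𝔽]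
    (h : ({S : Finset (Fin (2 * 2)) // S.card = 2} → 𝔽) →ₗ[𝔽] 𝔽)
    (p : {S : Finset (Fin (2 * 2)) // S.card = 2} → 𝔽) :
    h p = p ⟨{0, 1}, by decide⟩ * h (Pi.single ⟨{0, 1}, by decide⟩ 1) +
      p ⟨{0, 2}, by decide⟩ * h (Pi.single ⟨{0, 2}, by decide⟩ 1) +
      p ⟨{0, 3}, by decide⟩ * h (Pi.single ⟨{0, 3}, by decide⟩ 1) +
      p ⟨{1, 2}, by decide⟩ * h (Pi.single ⟨{1, 2}, by decide⟩ 1) +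
      p ⟨{1, 3}, by decide⟩ * h (Pi.single ⟨{1, 3}, by decide⟩ 1) +
      p ⟨{2, 3}, by decide⟩ * h (Pi.single ⟨{2, 3}, by decide⟩ 1) := by
  conv_lhs => rw [← (Pi.basisFun 𝔽 _).sum_repr p]
  simp only [map_add, map_smul, Pi.basisFun_apply, Pi.basisFun_repr, smul_eq_mul,
    sum_univ_pairs_fin_four]

theorem LinearMap.map_plucker_two (𝔽 : Type*) [Field 𝔽]
    (h : ({S : Finset (Fin (2 * 2)) // S.card = 2} → 𝔽) →ₗ[𝔽] 𝔽) (v w : Fin (2 * 2) → 𝔽) :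
    h (plucker 𝔽 2 2 ![v, w]) =
      (v 0 * w 1 - v 1 * w 0) * h (Pi.single ⟨{0, 1}, by decide⟩ 1) +
      (v 0 * w 2 - v 2 * w 0) * h (Pi.single ⟨{0, 2}, by decide⟩ 1) +
      (v 0 * w 3 - v 3 * w 0) * h (Pi.single ⟨{0, 3}, by decide⟩ 1) +
      (v 1 * w 2 - v 2 * w 1) * h (Pi.single ⟨{1, 2}, by decide⟩ 1) +
      (v 1 * w 3 - v 3 * w 1) * h (Pi.single ⟨{1, 3}, by decide⟩ 1) +
      (v 2 * w 3 - v 3 * w 2) * h (Pi.single ⟨{2, 3}, by decide⟩ 1) := by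
  rw [h.apply_eq_sum_pairs_fin_four, plucker_two_apply, plucker_two_apply, plucker_two_apply,
    plucker_two_apply, plucker_two_apply, plucker_two_apply] <;> decide

/-- For a symplectic vector space `E` of dimension 4, any linear functional `h`
on `Λ²E` vanishing on all decomposables `v ∧ w` with `⟨v, w⟩ = 0` (the cone over `L(2,E)`) is
a scalar multiple of `X_{14} + X_{23}` (0-indexed: the coordinates at `{0,3}` and `{1,2}`). -/
theorem functional_vanishing_L2 (𝔽 : Type*) [Field 𝔽]
    (h : ({S : Finset (Fin (2 * 2)) // S.card = 2} → 𝔽) →ₗ[𝔽] 𝔽)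
    (hvan : ∀ v w : Fin (2 * 2) → 𝔽, symForm 𝔽 2 v w = 0 → h (plucker 𝔽 2 2 ![v, w]) = 0) :
    ∃ A : 𝔽, ∀ p, h p = A * (p ⟨{0, 3}, by decide⟩ + p ⟨{1, 2}, by decide⟩) := by
  have h01 := hvan ![1, 0, 0, 0] ![0, 1, 0, 0] (by simp [symForm_two])
  have h02 := hvan ![1, 0, 0, 0] ![0, 0, 1, 0] (by simp [symForm_two])
  have h13 := hvan ![0, 1, 0, 0] ![0, 0, 0, 1] (by simp [symForm_two])
  have h23 := hvan ![0, 0, 1, 0] ![0, 0, 0, 1] (by simp [symForm_two])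
  have hmix := hvan ![1, 0, 1, 0] ![0, 1, 0, 1] (by simp [symForm_two])
  simp only [h.map_plucker_two, Matrix.cons_val] at h01 h02 h13 h23 hmix
  norm_num at h01 h02 h13 h23 hmix
  have h12 : h (Pi.single ⟨{1, 2}, by decide⟩ 1) = h (Pi.single ⟨{0, 3}, by decide⟩ 1) := by
    linear_combination h01 + h23 - hmix
  refine ⟨h (Pi.single ⟨{0, 3}, by decide⟩ 1), fun p => ?_⟩
  rw [h.apply_eq_sum_pairs_fin_four, h01, h02, h13, h23, h12]
  ring
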